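/- Operator-averaging step in convex split: let ρ_{PQ} ≤ 2^k ρ_P ⊗ σ_Q, and define τ_{PQ} = (1/n) ρ_{PQ} + ((n-1)/n) ρ_P ⊗ σ_Q. Then τ_{PQ} ≤ (1 + (2^k - 1)/n) ρ_P ⊗ σ_Q, and consequently D(ρ_{PQ} ‖ τ_{PQ}) ≥ D(ρ_{PQ} ‖ ρ_P ⊗ σ_Q) − log₂(1 + (2^k − 1)/n). -/

import Mathlib

open scoped Matrix Kronecker BigOperators ComplexOrder
open Matrix

noncomputable section

namespace QIT

variable {n : Type*} [Fintype n] [DecidableEq n]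

/-- Functional calculus for Hermitian matrices (junk value `0` otherwise). -/
def hcfc (A : Matrix n n ℂ) (f : ℝ → ℝ) : Matrix n n ℂ :=
  if h : A.IsHermitian then
    (h.eigenvectorUnitary : Matrix n n ℂ) * Matrix.diagonal ((↑) ∘ f ∘ h.eigenvalues) *
      (star h.eigenvectorUnitary : Matrix n n ℂ)
  else 0

/-- Positive semidefinite square root (junk otherwise). -/
def msqrt (A : Matrix n n ℂ) : Matrix n n ℂ := hcfc A Real.sqrt

/-- Matrix logarithm on the support (log 0 = 0). -/
def mlog (A : Matrix n n ℂ) : Matrix n n ℂ := hcfc A Real.log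

/-- Trace norm. -/
def traceNorm (A : Matrix n n ℂ) : ℝ := ((msqrt (Aᴴ * A)).trace).re

/-- Fidelity `‖√ρ√σ‖₁`. -/
def fidelity (ρ σ : Matrix n n ℂ) : ℝ := traceNorm (msqrt ρ * msqrt σ)

/-- Purified distance. -/
def purifiedDist (ρ σ : Matrix n n ℂ) : ℝ := Real.sqrt (1 - (fidelity ρ σ) ^ 2)

/-- A density matrix. -/
def IsState (ρ : Matrix n n ℂ) : Prop := ρ.PosSemidef ∧ ρ.trace = 1

/-- Max-relative entropy (base 2). -/
def Dmax (ρ σ : Matrix n n ℂ) : ℝ := sInf {l : ℝ | ((2 : ℝ) ^ l • σ - ρ).PosSemidef}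

/-- Smooth max-relative entropy. -/
def DmaxSmooth (ε : ℝ) (ρ σ : Matrix n n ℂ) : ℝ :=
  sInf {x : ℝ | ∃ ρ' : Matrix n n ℂ, IsState ρ' ∧ purifiedDist ρ' ρ ≤ ε ∧ x = Dmax ρ' σ}

/-- Umegaki relative entropy, in bits. -/
def relEnt (ρ σ : Matrix n n ℂ) : ℝ := ((ρ * (mlog ρ - mlog σ)).trace).re / Real.log 2

/-- Partial trace over the second factor. -/
def ptraceRight {α β : Type*} [Fintype β] (M : Matrix (α × β) (α × β) ℂ) : Matrix α α ℂ :=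
  Matrix.of fun i j => ∑ b, M (i, b) (j, b)

/-- Partial trace over the first factor. -/
def ptraceLeft {α β : Type*} [Fintype α] (M : Matrix (α × β) (α × β) ℂ) : Matrix β β ℂ :=
  Matrix.of fun i j => ∑ a, M (a, i) (a, j)

end QIT

open QIT

/-!
The first claim is linear algebra: `(1 + (2^k - 1)/n) ρ_P ⊗ σ_Q - τ = (2^k ρ_P ⊗ σ_Q - ρ)/n`.

For the second, operator monotonicity of the logarithm (`CFC.log_le_log`) only applies to
strictly positive matrices, while `ρ_P ⊗ σ_Q` may be singular. So we compare
`log (τ + ε) ≤ log (c ρ_P ⊗ σ_Q + ε)`, where `c = 1 + (2^k - 1)/n`, take `Tr (ρ ·)` of both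
sides, and let `ε → 0`. In an eigenbasis of `A`,
`Tr ρ log (A + ε) = ∑ᵢ log (λᵢ + ε) ⟨vᵢ, ρ vᵢ⟩`, and the weight `⟨vᵢ, ρ vᵢ⟩` vanishes whenever
`λᵢ = 0` because `ρ` is supported on the support of `A`; hence the limit is `Tr ρ log A` with the
convention `log 0 = 0` of `mlog`. The same expansion gives `Tr ρ log (c A) = Tr ρ log A + log c`
for a state `ρ`.
-/

open scoped MatrixOrder
open Filter Topology

namespace Matrix

variable {m : Type*}

lemma IsHermitian.add_smul_one [DecidableEq m] {A : Matrix m m ℂ} (hA : A.IsHermitian) (ε : ℝ) :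
    (A + ε • 1).IsHermitian :=
  hA.add (isHermitian_one.smul (.all ε))

variable [Fintype m]

lemma mulVec_eq_zero_of_le {A B : Matrix m m ℂ} (hA : 0 ≤ A) (hAB : A ≤ B) {x : m → ℂ}
    (hx : B *ᵥ x = 0) : A *ᵥ x = 0 := by
  refine (hA.posSemidef.dotProduct_mulVec_zero_iff x).mp
    (le_antisymm ?_ (hA.posSemidef.dotProduct_mulVec_nonneg x))
  simpa [sub_mulVec, hx] using (le_iff.mp hAB).dotProduct_mulVec_nonneg x

variable [DecidableEq m]

lemma PosSemidef.re_trace_mul_le_of_le {ρ X Y : Matrix m m ℂ} (hρ : ρ.PosSemidef) (hXY : X ≤ Y) :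
    (ρ * X).trace.re ≤ (ρ * Y).trace.re := by
  obtain ⟨B, hB⟩ := CStarAlgebra.nonneg_iff_eq_star_mul_self.mp (sub_nonneg.mpr hXY)
  have hpos : 0 ≤ (ρ * (Y - X)).trace := by
    rw [hB, ← mul_assoc, trace_mul_comm, ← mul_assoc, star_eq_conjTranspose]
    exact (hρ.mul_mul_conjTranspose_same B).trace_nonneg
  rw [mul_sub, trace_sub] at hpos
  simpa using (Complex.le_def.mp (sub_nonneg.mp hpos)).1

namespace IsHermitian

variable {A : Matrix m m ℂ} (hA : A.IsHermitian)

def eigenweight (ρ : Matrix m m ℂ) (i : m) : ℝ :=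
  (star ⇑(hA.eigenvectorBasis i) ⬝ᵥ ρ *ᵥ ⇑(hA.eigenvectorBasis i)).re

lemma re_trace_mul_cfc (ρ : Matrix m m ℂ) (f : ℝ → ℝ) :
    (ρ * cfc f A).trace.re = ∑ i, f (hA.eigenvalues i) * hA.eigenweight ρ i := by
  set U : Matrix m m ℂ := (hA.eigenvectorUnitary : Matrix m m ℂ)
  have hdiag : ∀ i, (star U * ρ * U) i i =
      star ⇑(hA.eigenvectorBasis i) ⬝ᵥ ρ *ᵥ ⇑(hA.eigenvectorBasis i) := fun i => by
    simp only [U, mul_apply, dotProduct, mulVec, Finset.mul_sum, Finset.sum_mul, mul_assoc,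
      star_apply, eigenvectorUnitary_apply, Pi.star_apply]
    exact Finset.sum_comm
  rw [hA.cfc_eq, IsHermitian.cfc, Unitary.conjStarAlgAut_apply, ← mul_assoc, ← mul_assoc,
    trace_mul_cycle, ← mul_assoc, trace, Complex.re_sum]
  refine Finset.sum_congr rfl fun i _ => ?_
  rw [diag_apply, mul_diagonal, hdiag, mul_comm]
  simp [eigenweight]

lemma sum_eigenweight (ρ : Matrix m m ℂ) : ∑ i, hA.eigenweight ρ i = ρ.trace.re := by
  have h := hA.re_trace_mul_cfc ρ (fun _ => 1)
  rw [cfc_const_one ℝ A, mul_one] at h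
  simpa using h.symm

lemma eigenweight_eq_zero {ρ : Matrix m m ℂ} (hker : ∀ x, A *ᵥ x = 0 → ρ *ᵥ x = 0) {i : m}
    (hi : hA.eigenvalues i = 0) : hA.eigenweight ρ i = 0 := by
  have hv : A *ᵥ ⇑(hA.eigenvectorBasis i) = 0 := by
    rw [hA.mulVec_eigenvectorBasis, hi, zero_smul]
  simp [eigenweight, hker _ hv]

end IsHermitian

variable {A : Matrix m m ℂ}

lemma IsHermitian.cfc_add_smul_one (hA : A.IsHermitian) (f : ℝ → ℝ) (ε : ℝ) :
    cfc f (A + ε • 1) = cfc (fun t => f (t + ε)) A := by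
  have hspec := A.finite_real_spectrum
  have hshift : cfc (· + ε) A = A + ε • 1 := by
    rw [← Algebra.algebraMap_eq_smul_one]
    exact (cfc_add_const ε (fun t => t) A (hspec.continuousOn _) hA).trans
      (congrArg (· + _) (cfc_id' ℝ A hA))
  rw [← hshift]
  exact (cfc_comp' f (· + ε) A ((hspec.image _).continuousOn f) (hspec.continuousOn _) hA).symm

lemma IsHermitian.cfc_smul (hA : A.IsHermitian) (f : ℝ → ℝ) (c : ℝ) :
    cfc f (c • A) = cfc (fun t => f (c * t)) A :=
  (cfc_comp_const_mul c f A ((A.finite_real_spectrum.image _).continuousOn f) hA).symm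

end Matrix

namespace QIT

lemma posSemidef_ptraceRight {α β : Type*} [Fintype α] [Fintype β]
    {M : Matrix (α × β) (α × β) ℂ} (hM : M.PosSemidef) : (ptraceRight M).PosSemidef := by
  classical
  let V : β → Matrix (α × β) α ℂ := fun b => of fun p a => if p = (a, b) then 1 else 0
  have h : ptraceRight M = ∑ b, (V b)ᴴ * M * V b := by
    ext i j
    simp [V, ptraceRight, mul_apply, Matrix.sum_apply, conjTranspose_apply]
  rw [h]
  exact posSemidef_sum _ fun b _ => hM.conjTranspose_mul_mul_same (V b)

variable {m : Type*} [Fintype m] [DecidableEq m] {A B S ρ : Matrix m m ℂ}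

lemma mlog_eq_cfc (hA : A.IsHermitian) : mlog A = cfc Real.log A := by
  rw [mlog, hcfc, dif_pos hA, hA.cfc_eq]
  rfl

lemma tendsto_re_trace_mul_mlog_add_smul_one (hA : A.IsHermitian)
    (hker : ∀ x, A *ᵥ x = 0 → ρ *ᵥ x = 0) :
    Tendsto (fun ε : ℝ => (ρ * mlog (A + ε • 1)).trace.re) (𝓝 0) (𝓝 (ρ * mlog A).trace.re) := by
  simp_rw [mlog_eq_cfc (hA.add_smul_one _), hA.cfc_add_smul_one, mlog_eq_cfc hA,
    hA.re_trace_mul_cfc]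
  refine tendsto_finsetSum _ fun i _ => ?_
  by_cases hi : hA.eigenvalues i = 0
  · simp [hA.eigenweight_eq_zero hker hi]
  · have hlog : ContinuousAt (fun ε => Real.log (hA.eigenvalues i + ε)) 0 :=
      (Real.continuousAt_log (by simpa using hi)).comp (by fun_prop)
    simpa using hlog.tendsto.mul_const (hA.eigenweight ρ i)

open scoped Matrix.Norms.L2Operator in
lemma re_trace_mul_mlog_le_of_le (hA : A.PosSemidef) (hAB : A ≤ B) (hρ : ρ.PosSemidef)
    (hker : ∀ x, A *ᵥ x = 0 → ρ *ᵥ x = 0) :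
    (ρ * mlog A).trace.re ≤ (ρ * mlog B).trace.re := by
  have hB : B.PosSemidef := (hA.nonneg.trans hAB).posSemidef
  have hkerB : ∀ x, B *ᵥ x = 0 → ρ *ᵥ x = 0 :=
    fun x hx => hker x (mulVec_eq_zero_of_le hA.nonneg hAB hx)
  refine le_of_tendsto_of_tendsto (b := 𝓝[>] 0)
    ((tendsto_re_trace_mul_mlog_add_smul_one hA.isHermitian hker).mono_left nhdsWithin_le_nhds)
    ((tendsto_re_trace_mul_mlog_add_smul_one hB.isHermitian hkerB).mono_left nhdsWithin_le_nhds) ?_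
  filter_upwards [self_mem_nhdsWithin] with ε (hε : 0 < ε)
  have hAε : (A + ε • 1).PosDef := PosDef.posSemidef_add hA (PosDef.one.smul (α := ℝ) hε)
  have hle : A + ε • 1 ≤ B + ε • 1 := by rwa [le_iff, add_sub_add_right_eq_sub]
  rw [mlog_eq_cfc hAε.isHermitian, mlog_eq_cfc (hB.isHermitian.add_smul_one ε)]
  exact hρ.re_trace_mul_le_of_le (CFC.log_le_log hle hAε.isStrictlyPositive)

lemma re_trace_mul_mlog_smul (hS : S.IsHermitian) (hker : ∀ x, S *ᵥ x = 0 → ρ *ᵥ x = 0)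
    {c : ℝ} (hc : c ≠ 0) :
    (ρ * mlog (c • S)).trace.re = (ρ * mlog S).trace.re + Real.log c * ρ.trace.re := by
  rw [mlog_eq_cfc (hS.smul (.all c)), hS.cfc_smul, mlog_eq_cfc hS, hS.re_trace_mul_cfc,
    hS.re_trace_mul_cfc, ← hS.sum_eigenweight, Finset.mul_sum, ← Finset.sum_add_distrib]
  refine Finset.sum_congr rfl fun i _ => ?_
  by_cases hi : hS.eigenvalues i = 0
  · simp [hS.eigenweight_eq_zero hker hi]
  · rw [Real.log_mul hc hi]
    ring

lemma relEnt_eq (ρ σ : Matrix m m ℂ) :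
    relEnt ρ σ = ((ρ * mlog ρ).trace.re - (ρ * mlog σ).trace.re) / Real.log 2 := by
  rw [relEnt, mul_sub, trace_sub, Complex.sub_re]

lemma relEnt_ge_sub_logb_of_le_smul {τ : Matrix m m ℂ} (hρ : IsState ρ) (hτ : τ.PosSemidef)
    (hτρ : ∀ x, τ *ᵥ x = 0 → ρ *ᵥ x = 0) (hS : S.IsHermitian)
    (hSρ : ∀ x, S *ᵥ x = 0 → ρ *ᵥ x = 0) {c : ℝ} (hc : c ≠ 0) (hτS : τ ≤ c • S) :
    relEnt ρ τ ≥ relEnt ρ S - Real.logb 2 c := by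
  have h := re_trace_mul_mlog_le_of_le hτ hτS hρ.1 hτρ
  rw [re_trace_mul_mlog_smul hS hSρ hc, hρ.2, Complex.one_re, mul_one] at h
  rw [relEnt_eq, relEnt_eq, Real.logb, ge_iff_le, ← sub_div]
  exact div_le_div_of_nonneg_right (by linarith) (Real.log_pos one_lt_two).le

end QIT

/-- Operator-averaging step in convex split: if `ρ_{PQ} ≤ 2^k ρ_P ⊗ σ_Q` and
`τ_{PQ} = (1/n)ρ_{PQ} + ((n-1)/n) ρ_P ⊗ σ_Q`, then
`τ_{PQ} ≤ (1 + (2^k−1)/n) ρ_P ⊗ σ_Q`, and consequently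
`D(ρ_{PQ}‖τ_{PQ}) ≥ D(ρ_{PQ}‖ρ_P⊗σ_Q) − log₂(1 + (2^k−1)/n)`. -/
theorem operator_averaging {dP dQ : Type*} [Fintype dP] [DecidableEq dP]
    [Fintype dQ] [DecidableEq dQ] (n : ℕ) (hn : 0 < n) (k : ℝ)
    (ρPQ : Matrix (dP × dQ) (dP × dQ) ℂ) (hρPQ : IsState ρPQ)
    (ρP : Matrix dP dP ℂ) (hρP : ρP = ptraceRight ρPQ)
    (σQ : Matrix dQ dQ ℂ) (hσQ : IsState σQ)
    (hsupp : ∀ x : (dP × dQ) → ℂ, (ρP ⊗ₖ σQ).mulVec x = 0 → ρPQ.mulVec x = 0)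
    (hle : ((2 : ℝ) ^ k • (ρP ⊗ₖ σQ) - ρPQ).PosSemidef)
    (τPQ : Matrix (dP × dQ) (dP × dQ) ℂ)
    (hτ : τPQ = (n : ℝ)⁻¹ • ρPQ + (((n : ℝ) - 1) / n) • (ρP ⊗ₖ σQ)) :
    ((1 + ((2 : ℝ) ^ k - 1) / n) • (ρP ⊗ₖ σQ) - τPQ).PosSemidef ∧
    relEnt ρPQ τPQ ≥
      relEnt ρPQ (ρP ⊗ₖ σQ) - Real.logb 2 (1 + ((2 : ℝ) ^ k - 1) / n) := by
  have hn1 : (1 : ℝ) ≤ n := by exact_mod_cast hn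
  have hn0 : (0 : ℝ) < n := by linarith
  have hS : (ρP ⊗ₖ σQ).PosSemidef := (hρP ▸ posSemidef_ptraceRight hρPQ.1).kronecker hσQ.1
  have hc : 1 + ((2 : ℝ) ^ k - 1) / n ≠ 0 := by
    rw [one_add_div hn0.ne']
    exact (div_pos (by linarith [Real.rpow_pos_of_pos two_pos k]) hn0).ne'
  have hτS : τPQ ≤ (1 + ((2 : ℝ) ^ k - 1) / n) • (ρP ⊗ₖ σQ) := by
    have h : (1 + ((2 : ℝ) ^ k - 1) / n) • (ρP ⊗ₖ σQ) - τPQ =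
        (n : ℝ)⁻¹ • ((2 : ℝ) ^ k • (ρP ⊗ₖ σQ) - ρPQ) := by
      rw [hτ]
      match_scalars
      · field_simp
        ring
      · field_simp
    rw [le_iff, h]
    exact hle.smul (inv_nonneg.mpr hn0.le)
  have hρn : ((n : ℝ)⁻¹ • ρPQ).PosSemidef := hρPQ.1.smul (inv_nonneg.mpr hn0.le)
  have hρτ : (n : ℝ)⁻¹ • ρPQ ≤ τPQ := by
    rw [le_iff, hτ, add_sub_cancel_left]
    exact hS.smul (div_nonneg (by linarith) hn0.le)
  have hτρ : ∀ x, τPQ *ᵥ x = 0 → ρPQ *ᵥ x = 0 := fun x hx => by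
    simpa [smul_mulVec, hn0.ne'] using mulVec_eq_zero_of_le hρn.nonneg hρτ hx
  exact ⟨hτS, relEnt_ge_sub_logb_of_le_smul hρPQ (hρn.nonneg.trans hρτ).posSemidef hτρ
    hS.isHermitian hsupp hc hτS⟩
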